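/- Suppose m ≡ 2 (mod 8) and m + 1 ≡ 2 (mod 3). Let j* be the n-tuple with j*_(n−1) = (m−1)/3, j*_n = 2, and all other entries 0. Then j* ∈ J, P(j*) ≠ 0, and for every j ∈ J with j ≠ j*, either P(j) = 0 or V(j) < V(j*). -/
import Mathlib


open Finset

/-- `s a` is the sum of the binary digits of `a`. -/
def sdig (a : ℕ) : ℕ := (Nat.digits 2 a).sum

/-- `carries a b` is the number of carries when adding `a` and `b` in base 2:
`c(a,b) = s(a) + s(b) - s(a+b)`. -/
def carries (a b : ℕ) : ℕ := sdig a + sdig b - sdig (a + b)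

/-- The generalized binomial coefficient `C_r(x) = x(x-1)⋯(x-r+1)/r!` (with `C_0(x) = 1`). -/
def genBinom (x : ℚ) (r : ℕ) : ℚ :=
  (∏ p ∈ Finset.range r, (x - p)) / (Nat.factorial r : ℚ)

/-- Membership in the index set `J`: here `j i` (for `i : Fin n`) is the paper's
`j_{i+1}`, so the defining relation `(2^n-1)j_1 + ⋯ + (2-1)j_n = m+1` becomes
`∑ k, (2^(n-k) - 1) * j k = m + 1`. -/
def inJ (n m : ℕ) (j : Fin n → ℕ) : Prop :=
  ∑ k : Fin n, (2 ^ (n - (k : ℕ)) - 1) * j k = m + 1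

/-- `α_j(k)`: for `K : Fin n`, `alphaF n m j K` is the paper's `α_j(K+1)`, i.e.
`m / 2^(n-K) - ∑_{I < K} 2^(K-I) j_{I+1}`. -/
def alphaF (n m : ℕ) (j : Fin n → ℕ) (K : Fin n) : ℚ :=
  (m : ℚ) / 2 ^ (n - (K : ℕ)) -
    ∑ I : Fin n, if (I : ℕ) < (K : ℕ) then 2 ^ ((K : ℕ) - (I : ℕ)) * (j I : ℚ) else 0

/-- `P(j) = ∏_{k=1}^n C_{j_k}(α_j(k))`. -/
def Pprod (n m : ℕ) (j : Fin n → ℕ) : ℚ :=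
  ∏ k : Fin n, genBinom (alphaF n m j k) (j k)

/-- `V(j) = -ν(P(j))`, where `ν` is the 2-adic valuation on `ℚ`. -/
def V (n m : ℕ) (j : Fin n → ℕ) : ℤ := - padicValRat 2 (Pprod n m j)

lemma sdig_zero : sdig 0 = 0 := by simp [sdig]

lemma sdig_rec (a : ℕ) (ha : a ≠ 0) : sdig a = a % 2 + sdig (a / 2) := by
  unfold sdig
  rw [Nat.digits_def' (by norm_num) (Nat.pos_of_ne_zero ha)]
  simp

lemma sdig_le (a : ℕ) : sdig a ≤ a := Nat.digit_sum_le 2 a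

lemma sdig_pos (a : ℕ) (ha : a ≠ 0) : 1 ≤ sdig a := by
  induction a using Nat.strong_induction_on with
  | _ a ih =>
    rw [sdig_rec a ha]
    rcases Nat.eq_zero_or_pos (a % 2) with h | h
    · have h2 : a / 2 ≠ 0 := by omega
      have := ih (a / 2) (by omega) h2
      omega
    · omega

lemma sdig_succ (a : ℕ) : sdig (a + 1) ≤ sdig a + 1 := by
  induction a using Nat.strong_induction_on with
  | _ a ih =>
    rcases Nat.eq_zero_or_pos a with rfl | ha
    · simp [sdig]
    rw [sdig_rec (a+1) (by omega), sdig_rec a (by omega)]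
    rcases Nat.mod_two_eq_zero_or_one a with h | h
    · have h2 : (a + 1) / 2 = a / 2 := by omega
      rw [h2]; omega
    · have h2 : (a + 1) / 2 = a / 2 + 1 := by omega
      rw [h2]
      have := ih (a / 2) (by omega)
      omega

lemma sdig_add_aux (s : ℕ) : ∀ a b, a + b = s → sdig (a + b) ≤ sdig a + sdig b := by
  induction s using Nat.strong_induction_on with
  | _ s ih =>
    intro a b hs
    rcases Nat.eq_zero_or_pos a with rfl | ha
    · simp
    rcases Nat.eq_zero_or_pos b with rfl | hb
    · simp
    rw [sdig_rec (a+b) (by omega), sdig_rec a (by omega), sdig_rec b (by omega)]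
    rcases Nat.mod_two_eq_zero_or_one a with h1 | h1 <;> rcases Nat.mod_two_eq_zero_or_one b with h2 | h2
    · have e : (a + b) / 2 = a / 2 + b / 2 := by omega
      rw [e]
      have := ih (a/2 + b/2) (by omega) (a/2) (b/2) rfl
      omega
    · have e : (a + b) / 2 = a / 2 + b / 2 := by omega
      rw [e]
      have := ih (a/2 + b/2) (by omega) (a/2) (b/2) rfl
      omega
    · have e : (a + b) / 2 = a / 2 + b / 2 := by omega
      rw [e]
      have := ih (a/2 + b/2) (by omega) (a/2) (b/2) rfl
      omega
    · have e : (a + b) / 2 = a / 2 + (b / 2 + 1) := by omega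
      rw [e]
      have i1 := ih (a/2 + (b/2 + 1)) (by omega) (a/2) (b/2 + 1) rfl
      have i2 := sdig_succ (b / 2)
      omega

lemma sdig_add (a b : ℕ) : sdig (a + b) ≤ sdig a + sdig b := sdig_add_aux (a+b) a b rfl

lemma sdig_75 (d : ℕ) (hd : 2 ≤ d) : 7 * sdig d ≤ 5 * d := by
  induction d using Nat.strong_induction_on with
  | _ d ih =>
    rcases lt_or_ge d 4 with h4 | h4
    · interval_cases d <;> simp [sdig_rec, sdig]
    · rw [sdig_rec d (by omega)]
      have := ih (d / 2) (by omega) (by omega)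
      omega

lemma padicValNat_two_odd {x : ℕ} (h : x % 2 = 1) : padicValNat 2 x = 0 :=
  padicValNat.eq_zero_of_not_dvd (by omega)

lemma padicValNat_two_mod4 {x : ℕ} (h : x % 4 = 2) : padicValNat 2 x = 1 := by
  have hx : x = 2 * (x / 2) := by omega
  rw [hx, padicValNat.mul (by norm_num) (by omega), padicValNat.self (by norm_num),
    padicValNat_two_odd (by omega)]

lemma padicValRat_int_odd {z : ℤ} (h : z % 2 = 1) : padicValRat 2 (z : ℚ) = 0 := by
  rw [padicValRat.of_int]
  have : z.natAbs % 2 = 1 := by omega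
  simp [padicValInt, padicValNat_two_odd this]

lemma padicValRat_int_mod4 {z : ℤ} (h : z % 4 = 2) : padicValRat 2 (z : ℚ) = 1 := by
  rw [padicValRat.of_int]
  have : z.natAbs % 4 = 2 := by omega
  simp [padicValInt, padicValNat_two_mod4 this]

lemma padicValRat_int_nonneg (z : ℤ) : 0 ≤ padicValRat 2 (z : ℚ) := by
  rw [padicValRat.of_int]; exact Int.natCast_nonneg _

lemma padicValRat_two_pow (e : ℕ) : padicValRat 2 ((2:ℚ) ^ e) = e := by
  have : ((2:ℚ) ^ e) = (((2^e : ℕ) : ℤ) : ℚ) := by push_cast; ring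
  rw [this, padicValRat.of_int]
  simp only [padicValInt, Int.natAbs_natCast]
  simp [padicValNat.prime_pow]

lemma padicValRat_two : padicValRat 2 (2:ℚ) = 1 := by
  have := padicValRat_two_pow 1
  simpa using this

lemma padicValRat_prod {ι : Type*} (s : Finset ι) (f : ι → ℚ) (hf : ∀ i ∈ s, f i ≠ 0) :
    padicValRat 2 (∏ i ∈ s, f i) = ∑ i ∈ s, padicValRat 2 (f i) := by
  classical
  induction s using Finset.cons_induction with
  | empty => simp
  | cons i s hi ih =>
    rw [Finset.prod_cons, Finset.sum_cons,
      padicValRat.mul (hf i (Finset.mem_cons_self i s))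
        (Finset.prod_ne_zero_iff.2 fun k hk => hf k (Finset.mem_cons_of_mem hk)),
      ih (fun k hk => hf k (Finset.mem_cons_of_mem hk))]

lemma padicValRat_factorial (r : ℕ) : padicValRat 2 (Nat.factorial r : ℚ) = (r : ℤ) - sdig r := by
  have h := sub_one_mul_padicValNat_factorial (p := 2) r
  norm_num at h
  have h2 : ((r.factorial : ℚ)) = (((r.factorial : ℕ) : ℤ) : ℚ) := by push_cast; ring
  rw [h2, padicValRat.of_int]
  simp only [padicValInt, Int.natAbs_natCast]
  rw [h]
  have := sdig_le r
  show ((r - sdig r : ℕ) : ℤ) = _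
  omega

-- the factor `x - p` for `x = M/2^e - c` with `M ≡ 2 mod 4`, `e ≥ 2`
lemma factor_val (M c e p : ℕ) (hM : M % 4 = 2) (he : 2 ≤ e) :
    ((M:ℚ)/2^e - c - p ≠ 0) ∧ padicValRat 2 ((M:ℚ)/2^e - c - p) = 1 - e := by
  have h4 : (4:ℤ) ∣ 2^e := by
    have : e = 2 + (e - 2) := by omega
    rw [this, pow_add]
    exact Dvd.intro _ rfl
  have hnum : ((M : ℤ) - 2^e * (c + p)) % 4 = 2 := by
    have hM' : (M:ℤ) % 4 = 2 := by omega
    have h4' : (4:ℤ) ∣ 2^e * (c + p) := h4.mul_right _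
    omega
  have hnz : ((M : ℤ) - 2^e * (c + p)) ≠ 0 := by omega
  have key : (M:ℚ)/2^e - c - p = (((M : ℤ) - 2^e * (c + p) : ℤ) : ℚ) / ((2:ℚ)^e) := by
    have h2 : ((2:ℚ)^e) ≠ 0 := by positivity
    field_simp
    push_cast
    ring
  constructor
  · rw [key]
    apply div_ne_zero
    · exact_mod_cast hnz
    · positivity
  · rw [key, padicValRat.div (by exact_mod_cast hnz) (by positivity),
      padicValRat_two_pow, padicValRat_int_mod4 hnum]

lemma genBinom_val (M c e r : ℕ) (hM : M % 4 = 2) (he : 2 ≤ e) :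
    genBinom ((M:ℚ)/2^e - c) r ≠ 0 ∧
    padicValRat 2 (genBinom ((M:ℚ)/2^e - c) r) = (sdig r : ℤ) - e * r := by
  have hfac : ∀ p ∈ Finset.range r, ((M:ℚ)/2^e - c - (p:ℚ)) ≠ 0 :=
    fun p _ => (factor_val M c e p hM he).1
  have hprodne : (∏ p ∈ Finset.range r, ((M:ℚ)/2^e - (c:ℚ) - (p:ℚ))) ≠ 0 :=
    Finset.prod_ne_zero_iff.2 hfac
  have hfne : ((Nat.factorial r : ℚ)) ≠ 0 := by
    exact_mod_cast (Nat.factorial_ne_zero r)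
  constructor
  · exact div_ne_zero hprodne hfne
  · unfold genBinom
    rw [padicValRat.div hprodne hfne, padicValRat_prod _ _ hfac, padicValRat_factorial]
    rw [Finset.sum_congr rfl (fun p hp => (factor_val M c e p hM he).2)]
    rw [Finset.sum_const, Finset.card_range]
    have := sdig_le r
    push_cast
    ring

lemma descPoch_eval_rat (r : ℕ) (x : ℚ) :
    Polynomial.eval x (descPochhammer ℚ r) = ∏ p ∈ Finset.range r, (x - p) := by
  induction r with
  | zero => simp
  | succ r ih => rw [descPochhammer_succ_eval, ih, Finset.prod_range_succ]

lemma genBinom_int (a : ℤ) (r : ℕ) : genBinom (a:ℚ) r = ((Ring.choose a r : ℤ) : ℚ) := by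
  have h1 : (∏ p ∈ Finset.range r, ((a:ℚ) - p)) = ((Polynomial.eval a (descPochhammer ℤ r) : ℤ) : ℚ) := by
    rw [descPochhammer_eval_cast ℚ r a, descPoch_eval_rat]
  have h2 : Polynomial.eval a (descPochhammer ℤ r) = (r.factorial : ℤ) * Ring.choose a r := by
    rw [Polynomial.eval_eq_smeval, Ring.descPochhammer_eq_factorial_smul_choose]
    simp [nsmul_eq_mul]
  unfold genBinom
  rw [h1, h2]
  have hfne : ((Nat.factorial r : ℚ)) ≠ 0 := by exact_mod_cast (Nat.factorial_ne_zero r)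
  push_cast
  field_simp

lemma genBinom_int_ne_zero (a : ℤ) (r : ℕ) (h : a < 0 ∨ (r:ℤ) ≤ a) : genBinom (a:ℚ) r ≠ 0 := by
  unfold genBinom
  apply div_ne_zero
  · apply Finset.prod_ne_zero_iff.2
    intro p hp
    simp only [Finset.mem_range] at hp
    have : (a:ℤ) - p ≠ 0 := by omega
    have : ((a:ℚ) - (p:ℚ)) = (((a - p : ℤ)):ℚ) := by push_cast; ring
    rw [this]
    exact_mod_cast ‹(a:ℤ) - p ≠ 0›
  · exact_mod_cast (Nat.factorial_ne_zero r)

lemma genBinom_int_zero (a : ℤ) (r : ℕ) (h0 : 0 ≤ a) (h1 : a < r) : genBinom (a:ℚ) r = 0 := by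
  unfold genBinom
  apply div_eq_zero_iff.2
  left
  apply Finset.prod_eq_zero (i := a.toNat)
  · simp only [Finset.mem_range]; omega
  · have : ((a.toNat : ℚ)) = (a:ℚ) := by exact_mod_cast Int.toNat_of_nonneg h0
    rw [this]; ring

lemma genBinom_int_val_nonneg (a : ℤ) (r : ℕ) : 0 ≤ padicValRat 2 (genBinom (a:ℚ) r) := by
  rw [genBinom_int]; exact padicValRat_int_nonneg _

lemma genBinom_two_val (R : ℕ) : padicValRat 2 (genBinom ((-(4*(R:ℤ)+1) : ℤ) : ℚ) 2) = 0 := by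
  have hgb : genBinom ((-(4*(R:ℤ)+1) : ℤ) : ℚ) 2 = (((4*(R:ℤ)+1) * (4*R+2) : ℤ) : ℚ) / 2 := by
    unfold genBinom
    rw [Finset.prod_range_succ, Finset.prod_range_succ, Finset.prod_range_zero]
    push_cast
    norm_num [Nat.factorial]
    ring
  rw [hgb]
  have hmod : ((4*(R:ℤ)+1) * (4*R+2)) % 4 = 2 := by
    have : ((4*(R:ℤ)+1) * (4*R+2)) = 4*(4*R^2 + 3*R) + 2 := by ring
    rw [this]; omega
  have hnz : ((4*(R:ℤ)+1) * (4*R+2)) ≠ 0 := by positivity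
  rw [padicValRat.div (by exact_mod_cast hnz) (by norm_num), padicValRat_int_mod4 hmod,
    padicValRat_two]
  ring

/-- the natural number `c_K = ∑_{I<K} 2^{K-I} j_I`. -/
def ccN (n' : ℕ) (j : Fin n' → ℕ) (K : Fin n') : ℕ :=
  ∑ I : Fin n', if (I:ℕ) < (K:ℕ) then 2^((K:ℕ)-(I:ℕ)) * j I else 0

/-- the integer value of `α_j(n)`. -/
def aZ (N R : ℕ) (j : Fin (N+2) → ℕ) : ℤ :=
  (12*(R:ℤ)+5) - ccN (N+2) j (Fin.last (N+1))

lemma alpha_form (n' m' : ℕ) (j : Fin n' → ℕ) (K : Fin n') :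
    alphaF n' m' j K = (m':ℚ)/2^(n' - (K:ℕ)) - ((ccN n' j K : ℕ) : ℚ) := by
  unfold alphaF ccN
  congr 1
  rw [Nat.cast_sum]
  apply Finset.sum_congr rfl
  intro I _
  split <;> push_cast <;> ring

lemma alpha_last (N R : ℕ) (j : Fin (N+2) → ℕ) :
    alphaF (N+2) (24*R+10) j (Fin.last (N+1)) = ((aZ N R j : ℤ) : ℚ) := by
  rw [alpha_form, aZ]
  have h1 : (N+2) - ((Fin.last (N+1) : Fin (N+2)):ℕ) = 1 := by simp
  rw [h1]
  have h2 : ((24*R+10 : ℕ) : ℚ) = 2*(12*R+5) := by push_cast; ring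
  rw [h2]
  push_cast
  ring

lemma front_fac (N R : ℕ) (j : Fin (N+2) → ℕ) (K : Fin (N+2)) (hK : (K:ℕ) < N+1) :
    genBinom (alphaF (N+2) (24*R+10) j K) (j K) ≠ 0 ∧
    padicValRat 2 (genBinom (alphaF (N+2) (24*R+10) j K) (j K))
      = (sdig (j K) : ℤ) - ((N+2-(K:ℕ) : ℕ) : ℤ) * j K := by
  rw [alpha_form]
  exact genBinom_val (24*R+10) (ccN (N+2) j K) (N+2-(K:ℕ)) (j K) (by omega) (by omega)

lemma Pprod_split (N m' : ℕ) (j : Fin (N+2) → ℕ) :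
    Pprod (N+2) m' j =
      (∏ K : Fin (N+1), genBinom (alphaF (N+2) m' j K.castSucc) (j K.castSucc)) *
        genBinom (alphaF (N+2) m' j (Fin.last (N+1))) (j (Fin.last (N+1))) :=
  Fin.prod_univ_castSucc _


lemma Pprod_zero (N R : ℕ) (j : Fin (N+2) → ℕ)
    (h : genBinom ((aZ N R j : ℤ):ℚ) (j (Fin.last (N+1))) = 0) :
    Pprod (N+2) (24*R+10) j = 0 := by
  rw [Pprod_split, alpha_last, h, mul_zero]

lemma V_formula (N R : ℕ) (j : Fin (N+2) → ℕ)
    (hne : genBinom ((aZ N R j : ℤ):ℚ) (j (Fin.last (N+1))) ≠ 0) :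
    Pprod (N+2) (24*R+10) j ≠ 0 ∧
    V (N+2) (24*R+10) j =
      (∑ K : Fin (N+1), (((N+2-(K:ℕ) : ℕ) : ℤ) * j K.castSucc - (sdig (j K.castSucc) : ℤ)))
        - padicValRat 2 (genBinom ((aZ N R j : ℤ):ℚ) (j (Fin.last (N+1)))) := by
  have hfr : ∀ K : Fin (N+1), (K ∈ Finset.univ) →
      genBinom (alphaF (N+2) (24*R+10) j K.castSucc) (j K.castSucc) ≠ 0 := by
    intro K _
    exact (front_fac N R j K.castSucc (by simpa using K.is_lt)).1
  have hprodne : (∏ K : Fin (N+1), genBinom (alphaF (N+2) (24*R+10) j K.castSucc) (j K.castSucc)) ≠ 0 :=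
    Finset.prod_ne_zero_iff.2 hfr
  have hlast : genBinom (alphaF (N+2) (24*R+10) j (Fin.last (N+1))) (j (Fin.last (N+1))) ≠ 0 := by
    rw [alpha_last]; exact hne
  constructor
  · rw [Pprod_split]; exact mul_ne_zero hprodne hlast
  · unfold V
    rw [Pprod_split, padicValRat.mul hprodne hlast, padicValRat_prod _ _ hfr,
      Finset.sum_congr rfl (fun K _ => (front_fac N R j K.castSucc (by simpa using K.is_lt)).2),
      alpha_last]
    rw [neg_add, ← Finset.sum_neg_distrib]
    congr 1
    apply Finset.sum_congr rfl
    intro K _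
    rw [Fin.coe_castSucc]
    ring


lemma pow737 (w : ℕ) (hw : 3 ≤ w) : 7*w ≤ 3*(2^w - 1) := by
  induction w, hw using Nat.le_induction with
  | base => norm_num
  | succ w hw ih =>
    have h1 : 2^(w+1) = 2*2^w := by ring
    have h2 : (8:ℕ) ≤ 2^w := by
      calc (8:ℕ) = 2^3 := by norm_num
      _ ≤ 2^w := Nat.pow_le_pow_right (by norm_num) hw
    omega

lemma perterm (w u : ℕ) (hw : 3 ≤ w) : 7*(w*u - sdig u) ≤ 3*((2^w - 1)*u) := by
  have h1 : 7*w ≤ 3*(2^w - 1) := pow737 w hw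
  have h2 : 7*(w*u) ≤ 3*((2^w-1)*u) := by
    calc 7*(w*u) = (7*w)*u := by ring
    _ ≤ (3*(2^w-1))*u := Nat.mul_le_mul_right u h1
    _ = 3*((2^w-1)*u) := by ring
  have h3 := sdig_le u
  have h4 : u ≤ w * u := Nat.le_mul_of_pos_left u (by omega)
  omega

lemma perterm' (w u : ℕ) (hw : 3 ≤ w) (hu : u ≠ 0) :
    7*(w*u - sdig u) + 7 ≤ 3*((2^w - 1)*u) := by
  have h1 : 7*w ≤ 3*(2^w - 1) := pow737 w hw
  have h2 : 7*(w*u) ≤ 3*((2^w-1)*u) := by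
    calc 7*(w*u) = (7*w)*u := by ring
    _ ≤ (3*(2^w-1))*u := Nat.mul_le_mul_right u h1
    _ = 3*((2^w-1)*u) := by ring
  have h3 := sdig_le u
  have h4 : u ≤ w * u := Nat.le_mul_of_pos_left u (by omega)
  have h5 := sdig_pos u hu
  omega

lemma key_nat (N : ℕ) (u : Fin N → ℕ) (δ t : ℕ) (hδ : 1 ≤ δ)
    (hbud : (∑ K : Fin N, (2^(N+2-(K:ℕ)) - 1) * u K) + t = 3*δ + 2) :
    (∑ K : Fin N, ((N+2-(K:ℕ)) * u K - sdig (u K))) + sdig δ < 2*δ := by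
  have hw : ∀ K : Fin N, 3 ≤ N+2-(K:ℕ) := fun K => by have := K.is_lt; omega
  by_cases hall : ∀ K, u K = 0
  · have hT : (∑ K : Fin N, ((N+2-(K:ℕ)) * u K - sdig (u K))) = 0 :=
      Finset.sum_eq_zero fun K _ => by rw [hall K]; simp [sdig_zero]
    have := sdig_le δ
    omega
  · push_neg at hall
    obtain ⟨K0, hK0⟩ := hall
    set A := ∑ K : Fin N, (2^(N+2-(K:ℕ)) - 1) * u K with hAdef
    set T := ∑ K : Fin N, ((N+2-(K:ℕ)) * u K - sdig (u K)) with hTdef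
    have hp8 : (8:ℕ) ≤ 2^(N+2-(K0:ℕ)) := by
      calc (8:ℕ) = 2^3 := by norm_num
      _ ≤ _ := Nat.pow_le_pow_right (by norm_num) (hw K0)
    have hterm : 7 ≤ (2^(N+2-(K0:ℕ)) - 1) * u K0 := by
      calc (7:ℕ) = 7 * 1 := by norm_num
      _ ≤ (2^(N+2-(K0:ℕ)) - 1) * u K0 := Nat.mul_le_mul (by omega) (by omega)
    have hA7 : 7 ≤ A := by
      have h := Finset.single_le_sum (f := fun K : Fin N => (2^(N+2-(K:ℕ))-1) * u K)
        (fun i _ => Nat.zero_le _) (Finset.mem_univ K0)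
      have h' : (2^(N+2-(K0:ℕ))-1) * u K0 ≤ A := by simpa [← hAdef] using h
      omega
    have hT7 : 7*T + 7 ≤ 3*A := by
      rw [hTdef, hAdef, Finset.mul_sum, Finset.mul_sum,
        ← Finset.sum_erase_add _ _ (Finset.mem_univ K0),
        ← Finset.sum_erase_add _ (fun K : Fin N => 3*((2^(N+2-(K:ℕ))-1) * u K)) (Finset.mem_univ K0)]
      have h1 : (∑ K ∈ Finset.univ.erase K0, 7*((N+2-(K:ℕ)) * u K - sdig (u K)))
          ≤ ∑ K ∈ Finset.univ.erase K0, 3*((2^(N+2-(K:ℕ))-1) * u K) :=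
        Finset.sum_le_sum fun i _ => by
          have := perterm (N+2-(i:ℕ)) (u i) (hw i); omega
      have h2 := perterm' (N+2-(K0:ℕ)) (u K0) (hw K0) hK0
      omega
    have h75 := sdig_75 δ (by omega)
    omega


lemma split3 {M : Type*} [AddCommMonoid M] (N : ℕ) (g : Fin (N+2) → M) :
    ∑ k : Fin (N+2), g k =
      (∑ K : Fin N, g K.castSucc.castSucc) + g ((Fin.last N).castSucc) + g (Fin.last (N+1)) := by
  rw [Fin.sum_univ_castSucc, Fin.sum_univ_castSucc]

/-- If `m ≡ 2 mod 8` and `m + 1 ≡ 2 mod 3`, then the tuple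
`j* = (0, …, 0, (m-1)/3, 2)` lies in `J`, `P(j*) ≠ 0`, and every other `j ∈ J`
has `P(j) = 0` or `V(j) < V(j*)`. -/
theorem stmt12 (n m : ℕ) (hn : 3 ≤ n) (hm : 1 ≤ m) (hmn : m ≤ 2 ^ (n + 1) - 3)
    (h8 : m % 8 = 2) (h3 : (m + 1) % 3 = 2)
    (jst : Fin n → ℕ)
    (hjst : jst = fun k : Fin n =>
      if (k : ℕ) = n - 2 then (m - 1) / 3 else if (k : ℕ) = n - 1 then 2 else 0) :
    inJ n m jst ∧ Pprod n m jst ≠ 0 ∧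
      ∀ j : Fin n → ℕ, inJ n m j → j ≠ jst →
        Pprod n m j = 0 ∨ V n m j < V n m jst := by
  obtain ⟨N, rfl⟩ : ∃ N, n = N + 2 := ⟨n - 2, by omega⟩
  have hN : 1 ≤ N := by omega
  obtain ⟨R, rfl⟩ : ∃ R, m = 24*R + 10 := ⟨m / 24, by omega⟩
  clear hn hm hmn h8 h3
  have hjst' : ∀ k : Fin (N+2), jst k =
      if (k:ℕ) = N then 8*R+3 else if (k:ℕ) = N+1 then 2 else 0 := by
    intro k
    rw [hjst]
    simp only [show N+2-2 = N by omega, show N+2-1 = N+1 by omega,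
      show (24*R+10-1)/3 = 8*R+3 by omega]
  have hvN : (((Fin.last N).castSucc : Fin (N+2)) : ℕ) = N := by simp
  have hvL : ((Fin.last (N+1) : Fin (N+2)) : ℕ) = N+1 := by simp
  have hvF : ∀ K : Fin N, ((K.castSucc.castSucc : Fin (N+2)) : ℕ) = (K:ℕ) := by
    intro K; simp
  have hjN : jst ((Fin.last N).castSucc) = 8*R+3 := by
    rw [hjst', hvN]; simp
  have hjL : jst (Fin.last (N+1)) = 2 := by
    rw [hjst', hvL, if_neg (by omega), if_pos rfl]
  have hjF : ∀ K : Fin N, jst K.castSucc.castSucc = 0 := by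
    intro K
    have := K.is_lt
    rw [hjst', hvF K, if_neg (by omega), if_neg (by omega)]
  -- clause 1
  have hinJ : inJ (N+2) (24*R+10) jst := by
    unfold inJ
    rw [split3 N (fun k => (2^(N+2-(k:ℕ)) - 1) * jst k)]
    have h1 : (∑ K : Fin N, (2^(N+2-((K.castSucc.castSucc : Fin (N+2)):ℕ)) - 1) * jst K.castSucc.castSucc) = 0 :=
      Finset.sum_eq_zero fun K _ => by rw [hjF]; ring
    rw [h1, hjN, hjL, hvN, hvL, show N+2-N = 2 by omega, show N+2-(N+1) = 1 by omega]
    norm_num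
    omega
  -- ccN of jst
  have hcc : ccN (N+2) jst (Fin.last (N+1)) = 16*R+6 := by
    unfold ccN
    rw [Finset.sum_eq_single ((Fin.last N).castSucc)]
    · rw [hvN, hvL, if_pos (by omega), hjN, show N+1-N = 1 by omega]
      norm_num
      omega
    · intro I _ hne
      rw [hvL]
      by_cases hI : (I:ℕ) < N+1
      · rw [if_pos hI]
        have hvI : (I:ℕ) ≠ N := by
          intro h
          exact hne (Fin.ext (by rw [hvN, h]))
        rw [hjst', if_neg hvI, if_neg (by omega)]
        ring
      · rw [if_neg hI]
    · intro h; exact absurd (Finset.mem_univ _) h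
  have haZ : aZ N R jst = -(4*(R:ℤ)+1) := by
    unfold aZ
    rw [hcc]
    push_cast
    ring
  -- clause 2
  have hne0 : genBinom ((aZ N R jst : ℤ):ℚ) (jst (Fin.last (N+1))) ≠ 0 := by
    rw [haZ, hjL]
    exact genBinom_int_ne_zero _ 2 (Or.inl (by omega))
  obtain ⟨hPne, hVst⟩ := V_formula N R jst hne0
  have hVstval : V (N+2) (24*R+10) jst = 2*(8*R+3 : ℤ) - sdig (8*R+3) := by
    rw [hVst, haZ, hjL, genBinom_two_val]
    rw [Fin.sum_univ_castSucc]
    have h1 : (∑ K : Fin N, ((((N+2-((K.castSucc : Fin (N+1)):ℕ)) : ℕ) : ℤ) * jst (K.castSucc).castSucc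
        - (sdig (jst (K.castSucc).castSucc) : ℤ))) = 0 :=
      Finset.sum_eq_zero fun K _ => by rw [hjF]; simp [sdig_zero]
    rw [h1, hjN]
    rw [Fin.val_last, show N+2-N = 2 by omega]
    push_cast
    ring
  refine ⟨hinJ, hPne, ?_⟩
  intro j hj hjne
  -- budget
  have hbud : (∑ K : Fin N, (2^(N+2-(K:ℕ)) - 1) * j K.castSucc.castSucc)
      + 3 * j ((Fin.last N).castSucc) + j (Fin.last (N+1)) = 24*R+11 := by
    unfold inJ at hj
    rw [split3 N (fun k => (2^(N+2-(k:ℕ)) - 1) * j k)] at hj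
    simp only [Fin.coe_castSucc, Fin.val_last] at hj
    rw [show N+2-N = 2 by omega, show N+2-(N+1) = 1 by omega] at hj
    norm_num at hj
    omega
  set b := j ((Fin.last N).castSucc) with hbdef
  set t := j (Fin.last (N+1)) with htdef
  set A := ∑ K : Fin N, (2^(N+2-(K:ℕ)) - 1) * j K.castSucc.castSucc with hAdef
  -- b < q
  have hblt : b < 8*R+3 := by
    rcases Nat.lt_or_ge b (8*R+3) with h | h
    · exact h
    -- b ≥ q forces b = q, A = 0, t = 2, i.e. j = jst
    exfalso
    have hbq : b = 8*R+3 := by omega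
    have hA0 : A = 0 := by
      by_contra hA
      obtain ⟨K0, hK0⟩ : ∃ K0 : Fin N, (2^(N+2-(K0:ℕ)) - 1) * j K0.castSucc.castSucc ≠ 0 := by
        by_contra hallz
        push_neg at hallz
        exact hA (Finset.sum_eq_zero fun K _ => hallz K)
      have hu0 : j K0.castSucc.castSucc ≠ 0 := by
        intro hz; exact hK0 (by rw [hz]; ring)
      have hp8 : (8:ℕ) ≤ 2^(N+2-(K0:ℕ)) := by
        calc (8:ℕ) = 2^3 := by norm_num
        _ ≤ _ := Nat.pow_le_pow_right (by norm_num) (by have := K0.is_lt; omega)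
      have hterm : 7 ≤ (2^(N+2-(K0:ℕ)) - 1) * j K0.castSucc.castSucc :=
        le_trans (by omega : (7:ℕ) ≤ (2^(N+2-(K0:ℕ)) - 1) * 1)
          (Nat.mul_le_mul_left _ (by omega))
      have hA7 : 7 ≤ A := by
        have h := Finset.single_le_sum
          (f := fun K : Fin N => (2^(N+2-(K:ℕ)) - 1) * j K.castSucc.castSucc)
          (fun i _ => Nat.zero_le _) (Finset.mem_univ K0)
        have h' : (2^(N+2-(K0:ℕ)) - 1) * j K0.castSucc.castSucc ≤ A := by
          simpa [← hAdef] using h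
        omega
      omega
    have ht2 : t = 2 := by omega
    apply hjne
    funext k
    have hk := k.is_lt
    have hz : ∀ K : Fin N, (2^(N+2-(K:ℕ)) - 1) * j K.castSucc.castSucc = 0 := by
      have h0 : (∑ K : Fin N, (2^(N+2-(K:ℕ)) - 1) * j K.castSucc.castSucc) = 0 := by
        rw [← hAdef]; exact hA0
      intro K
      exact Finset.sum_eq_zero_iff.mp h0 K (Finset.mem_univ K)
    rcases Nat.lt_trichotomy (k:ℕ) N with hlt | heq | hgt
    · have hk' : k = ((⟨(k:ℕ), hlt⟩ : Fin N)).castSucc.castSucc := Fin.ext (by simp)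
      have hwpos : 2 ≤ 2^(N+2-((⟨(k:ℕ), hlt⟩ : Fin N) : ℕ)) := by
        calc (2:ℕ) = 2^1 := by norm_num
        _ ≤ _ := Nat.pow_le_pow_right (by norm_num) (by omega)
      have := hz ⟨(k:ℕ), hlt⟩
      have hj0 : j ((⟨(k:ℕ), hlt⟩ : Fin N)).castSucc.castSucc = 0 := by
        rcases Nat.mul_eq_zero.mp this with h | h
        · omega
        · exact h
      rw [hk', hj0, hjst']
      have hvk : ((((⟨(k:ℕ), hlt⟩ : Fin N)).castSucc.castSucc : Fin (N+2)) : ℕ) = (k:ℕ) := by simp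
      rw [hvk, if_neg (by omega), if_neg (by omega)]
    · have hk' : k = (Fin.last N).castSucc := Fin.ext (by rw [hvN, heq])
      rw [hk', ← hbdef, hjN, hbq]
    · have hk1 : (k:ℕ) = N+1 := by omega
      have hk' : k = Fin.last (N+1) := Fin.ext (by rw [hvL, hk1])
      rw [hk', ← htdef, hjL, ht2]
  -- main case
  set δ := (8*R+3) - b with hddef
  have hd1 : 1 ≤ δ := by omega
  have hAt : A + t = 3*δ + 2 := by omega
  by_cases hzero : 0 ≤ aZ N R j ∧ aZ N R j < (t:ℤ)
  · left
    exact Pprod_zero N R j (genBinom_int_zero _ _ hzero.1 (by rw [← htdef]; exact hzero.2))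
  · right
    push_neg at hzero
    have hcase : aZ N R j < 0 ∨ (t:ℤ) ≤ aZ N R j := by
      rcases lt_or_ge (aZ N R j) 0 with h | h
      · exact Or.inl h
      · exact Or.inr (hzero h)
    have hne : genBinom ((aZ N R j : ℤ):ℚ) (j (Fin.last (N+1))) ≠ 0 := by
      rw [← htdef]; exact genBinom_int_ne_zero _ t hcase
    obtain ⟨hPne', hV⟩ := V_formula N R j hne
    rw [hVstval, hV]
    have hkey : (∑ K : Fin N, ((N+2-(K:ℕ)) * j K.castSucc.castSucc - sdig (j K.castSucc.castSucc)))
        + sdig δ < 2*δ :=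
      key_nat N (fun K => j K.castSucc.castSucc) δ t hd1 (by simpa [← hAdef] using hAt)
    have hw0 : (0:ℤ) ≤ padicValRat 2 (genBinom ((aZ N R j : ℤ):ℚ) (j (Fin.last (N+1)))) :=
      genBinom_int_val_nonneg _ _
    have hsq : sdig (8*R+3) ≤ sdig b + sdig δ := by
      have hbd : 8*R+3 = b + δ := by omega
      rw [hbd]; exact sdig_add b δ
    have hsplit : (∑ K : Fin (N+1), ((((N+2-((K : Fin (N+1)):ℕ)) : ℕ) : ℤ) * j K.castSucc
          - (sdig (j K.castSucc) : ℤ)))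
        = ((∑ K : Fin N, ((N+2-(K:ℕ)) * j K.castSucc.castSucc - sdig (j K.castSucc.castSucc)) : ℕ) : ℤ)
          + (2*(b:ℤ) - sdig b) := by
      rw [Fin.sum_univ_castSucc]
      congr 1
      · rw [Nat.cast_sum]
        apply Finset.sum_congr rfl
        intro K _
        rw [Fin.coe_castSucc]
        have h1 : sdig (j K.castSucc.castSucc) ≤ (N+2-(K:ℕ)) * j K.castSucc.castSucc :=
          le_trans (sdig_le _) (Nat.le_mul_of_pos_left _ (by have := K.is_lt; omega))
        rw [Nat.cast_sub h1, Nat.cast_mul]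
      · rw [Fin.val_last, show N+2-N = 2 by omega, ← hbdef]
        push_cast
        ring
    rw [hsplit]
    omega
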